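/- Let H be a symmetric positive definite n×n matrix and G symmetric positive definite. Then the limit as ρ → ∞ of ((1/ρ)G + H)^{-1} equals H^{-1}. More generally, for H symmetric positive semidefinite and any g ∈ Range(H), the limit as ρ → ∞ of ((1/ρ)G + H)^{-1} g equals the vector G^{-1/2}(G^{-1/2} H G^{-1/2})^† G^{-1/2} g, which for the case G = I equals H^† g. -/

import Mathlib

open Matrix Filter

/-- `B` is the Moore–Penrose pseudoinverse of `A`. -/
def IsMoorePenrose {m n : ℕ} (A : Matrix (Fin m) (Fin n) ℝ)
    (B : Matrix (Fin n) (Fin m) ℝ) : Prop :=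
  A * B * A = A ∧ B * A * B = B ∧ (A * B)ᵀ = A * B ∧ (B * A)ᵀ = B * A

/-- The positive semidefinite square root of a positive semidefinite matrix
(the definition `Matrix.PosSemidef.sqrt` of the older Mathlib, since removed). -/
noncomputable def Matrix.PosSemidef.sqrt {n : Type*} [Fintype n]
    [DecidableEq n] {A : Matrix n n ℝ} (hA : A.PosSemidef) : Matrix n n ℝ :=
  hA.1.eigenvectorUnitary.1 * diagonal ((√·) ∘ hA.1.eigenvalues) *
    (star hA.1.eigenvectorUnitary : Matrix n n ℝ)

/-!
Write `G = Q * Q` with `Q = G^{1/2}`, put `K = Q⁻¹ H Q⁻¹ ⪰ 0` and `ε = ρ⁻¹`. Then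
`(ε G + H)⁻¹ = Q⁻¹ (ε + K)⁻¹ Q⁻¹`, and `g = H x` gives `Q⁻¹ g = K (Q x)`, so everything reduces to
`(ε + K)⁻¹ K → K† K` as `ε → 0⁺`. The Penrose identities `K K† K = K` and `(K† K)ᵀ = K† K` give
`(ε + K)⁻¹ K = K† K - ε K†ᵀ + ε² (ε + K)⁻¹ K†ᵀ`, and `ε (ε + K)⁻¹` stays bounded since
`|(ε + K) v|² ≥ ε² |v|²` for `K ⪰ 0`. For `G = 1` the same argument with `Q = 1` identifies the
limit as `H† g`, and the two limits agree.
-/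

open Topology

theorem norm_le_sqrt_dotProduct_self {ι : Type*} [Fintype ι] (x : ι → ℝ) :
    ‖x‖ ≤ √(x ⬝ᵥ x) := by
  refine (pi_norm_le_iff_of_nonneg (Real.sqrt_nonneg _)).mpr fun i => ?_
  rw [Real.norm_eq_abs]
  refine Real.abs_le_sqrt ?_
  rw [sq]
  exact Finset.single_le_sum (f := fun j => x j * x j) (fun j _ => mul_self_nonneg _)
    (Finset.mem_univ i)

namespace Matrix.PosSemidef

variable {ι : Type*} [Fintype ι] {A : Matrix ι ι ℝ}

theorem dotProduct_smul_self_le (hA : A.PosSemidef) {ε : ℝ} (hε : 0 ≤ ε) (v : ι → ℝ) :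
    (ε • v) ⬝ᵥ (ε • v) ≤ (ε • v + A *ᵥ v) ⬝ᵥ (ε • v + A *ᵥ v) := by
  have hvAv : 0 ≤ v ⬝ᵥ A *ᵥ v := by simpa using hA.dotProduct_mulVec_nonneg v
  have hAvAv : 0 ≤ (A *ᵥ v) ⬝ᵥ (A *ᵥ v) := Finset.sum_nonneg fun i _ => mul_self_nonneg _
  have hexpand : (ε • v + A *ᵥ v) ⬝ᵥ (ε • v + A *ᵥ v) =
      (ε • v) ⬝ᵥ (ε • v) + 2 * ε * (v ⬝ᵥ A *ᵥ v) + (A *ᵥ v) ⬝ᵥ (A *ᵥ v) := by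
    simp only [add_dotProduct, dotProduct_add, smul_dotProduct, dotProduct_smul, smul_eq_mul,
      dotProduct_comm (A *ᵥ v) v]
    ring
  rw [hexpand]
  linarith [mul_nonneg (mul_nonneg zero_le_two hε) hvAv]

variable [DecidableEq ι]

theorem sqrt_eq_conjStarAlgAut (hA : A.PosSemidef) :
    hA.sqrt = Unitary.conjStarAlgAut ℝ _ hA.1.eigenvectorUnitary
      (diagonal ((√·) ∘ hA.1.eigenvalues)) := rfl

theorem sqrt_mul_self (hA : A.PosSemidef) : hA.sqrt * hA.sqrt = A := by
  rw [sqrt_eq_conjStarAlgAut, ← map_mul, diagonal_mul_diagonal]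
  conv_rhs => rw [hA.1.spectral_theorem]
  congr 2
  funext i
  simp [Real.mul_self_sqrt (hA.eigenvalues_nonneg i)]

theorem isHermitian_sqrt (hA : A.PosSemidef) : hA.sqrt.IsHermitian := by
  rw [sqrt_eq_conjStarAlgAut]
  exact IsSelfAdjoint.map (isHermitian_diagonal ((√·) ∘ hA.1.eigenvalues))
    (Unitary.conjStarAlgAut ℝ _ hA.1.eigenvectorUnitary)

theorem isUnit_det_smul_one_add (hA : A.PosSemidef) {ε : ℝ} (hε : 0 < ε) :
    IsUnit (ε • 1 + A).det :=
  (isUnit_iff_isUnit_det _).mp ((PosDef.one.smul hε).add_posSemidef hA).isUnit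

theorem norm_smul_inv_smul_one_add_mulVec_le (hA : A.PosSemidef) {ε : ℝ} (hε : 0 < ε)
    (w : ι → ℝ) : ‖ε • ((ε • 1 + A)⁻¹ *ᵥ w)‖ ≤ √(w ⬝ᵥ w) := by
  set v := (ε • 1 + A)⁻¹ *ᵥ w
  have hw : ε • v + A *ᵥ v = w := by
    have h : (ε • 1 + A) *ᵥ v = w := by
      rw [mulVec_mulVec, mul_nonsing_inv _ (hA.isUnit_det_smul_one_add hε), one_mulVec]
    rwa [add_mulVec, smul_mulVec, one_mulVec] at h
  calc ‖ε • v‖ ≤ √((ε • v) ⬝ᵥ (ε • v)) := norm_le_sqrt_dotProduct_self _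
    _ ≤ √(w ⬝ᵥ w) := Real.sqrt_le_sqrt (hw ▸ hA.dotProduct_smul_self_le hε.le v)

end Matrix.PosSemidef

theorem Matrix.PosDef.tendsto_inv_smul_add {ι : Type*} [Fintype ι] [DecidableEq ι]
    {H : Matrix ι ι ℝ} (hH : H.PosDef) (G : Matrix ι ι ℝ) :
    Tendsto (fun ρ : ℝ => (ρ⁻¹ • G + H)⁻¹) atTop (𝓝 H⁻¹) := by
  have hinv : ContinuousAt Inv.inv H :=
    continuousAt_matrix_inv H (by
      rw [Ring.inverse_eq_inv']
      exact continuousAt_inv₀ hH.det_pos.ne')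
  have hreg : Tendsto (fun ρ : ℝ => ρ⁻¹ • G + H) atTop (𝓝 H) := by
    simpa using ((tendsto_inv_atTop_zero (𝕜 := ℝ)).smul_const G).add_const H
  exact hinv.tendsto.comp hreg

namespace IsMoorePenrose

variable {n : ℕ} {K M : Matrix (Fin n) (Fin n) ℝ}

theorem inv_smul_one_add_mul_eq (hM : IsMoorePenrose K M) (hK : K.IsHermitian) {ε : ℝ}
    (hA : IsUnit (ε • 1 + K).det) :
    (ε • 1 + K)⁻¹ * K = M * K - ε • Mᵀ + ε • (ε • ((ε • 1 + K)⁻¹ * Mᵀ)) := by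
  set A := (ε • 1 + K)⁻¹
  have hAK : A * K = 1 - ε • A := by
    have h := nonsing_inv_mul (ε • 1 + K) hA
    rw [mul_add, Matrix.mul_smul, mul_one] at h
    exact eq_sub_of_add_eq' h
  have hKt : Kᵀ = K := by rw [← conjTranspose_eq_transpose_of_trivial]; exact hK
  have hMK : M * K = K * Mᵀ := by rw [← hM.2.2.2, transpose_mul, hKt]
  calc A * K = A * K * (M * K) := by rw [mul_assoc, ← mul_assoc K, hM.1]
    _ = (1 - ε • A) * (K * Mᵀ) := by rw [hAK, hMK]
    _ = K * Mᵀ - ε • (A * K * Mᵀ) := by rw [sub_mul, one_mul, Matrix.smul_mul, mul_assoc]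
    _ = K * Mᵀ - ε • ((1 - ε • A) * Mᵀ) := by rw [hAK]
    _ = M * K - ε • Mᵀ + ε • (ε • (A * Mᵀ)) := by
      rw [hMK, sub_mul, one_mul, Matrix.smul_mul, smul_sub]
      abel

theorem tendsto_inv_smul_one_add_mulVec (hM : IsMoorePenrose K M) (hK : K.PosSemidef)
    (w : Fin n → ℝ) :
    Tendsto (fun ε : ℝ => (ε • 1 + K)⁻¹ *ᵥ (K *ᵥ w)) (𝓝[>] 0) (𝓝 (M *ᵥ (K *ᵥ w))) := by
  have hlin : Tendsto (fun ε : ℝ => (M * K) *ᵥ w - ε • (Mᵀ *ᵥ w)) (𝓝[>] 0)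
      (𝓝 ((M * K) *ᵥ w)) := by
    refine tendsto_nhdsWithin_of_tendsto_nhds ?_
    have hcont : Continuous fun ε : ℝ => (M * K) *ᵥ w - ε • (Mᵀ *ᵥ w) := by fun_prop
    simpa using hcont.tendsto 0
  have hrem : Tendsto (fun ε : ℝ => ε • (ε • ((ε • 1 + K)⁻¹ *ᵥ (Mᵀ *ᵥ w)))) (𝓝[>] 0)
      (𝓝 0) :=
    (tendsto_nhdsWithin_of_tendsto_nhds tendsto_id).zero_smul_isBoundedUnder_le
      (isBoundedUnder_of_eventually_le (eventually_nhdsWithin_of_forall fun ε hε =>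
        hK.norm_smul_inv_smul_one_add_mulVec_le hε (Mᵀ *ᵥ w)))
  rw [mulVec_mulVec]
  refine (by simpa using hlin.add hrem : Tendsto _ _ _).congr' ?_
  filter_upwards [self_mem_nhdsWithin] with ε hε
  rw [mulVec_mulVec,
    hM.inv_smul_one_add_mul_eq hK.isHermitian (hK.isUnit_det_smul_one_add hε)]
  simp only [add_mulVec, sub_mulVec, smul_mulVec]

theorem tendsto_inv_smul_add_mulVec {H Q G : Matrix (Fin n) (Fin n) ℝ}
    (hM : IsMoorePenrose (Q⁻¹ * H * Q⁻¹) M) (hH : H.PosSemidef) (hQ : Q.IsHermitian)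
    (hQG : Q * Q = G) (hG : IsUnit G.det) {g : Fin n → ℝ}
    (hg : g ∈ LinearMap.range H.mulVecLin) :
    Tendsto (fun ρ : ℝ => (ρ⁻¹ • G + H)⁻¹ *ᵥ g) atTop (𝓝 (Q⁻¹ *ᵥ (M *ᵥ (Q⁻¹ *ᵥ g)))) := by
  obtain ⟨x, rfl⟩ := hg
  rw [mulVecLin_apply]
  have hQdet : IsUnit Q.det := isUnit_of_mul_isUnit_left (by rwa [← det_mul, hQG])
  set S := Q⁻¹
  set K := S * H * S
  have hK : K.PosSemidef := by
    have h := hH.conjTranspose_mul_mul_same S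
    rwa [hQ.inv.eq] at h
  have hSg : S *ᵥ (H *ᵥ x) = K *ᵥ (Q *ᵥ x) := by
    rw [mulVec_mulVec, mulVec_mulVec, mul_assoc (S * H), nonsing_inv_mul Q hQdet, mul_one]
  have hconj (ρ : ℝ) : (ρ⁻¹ • G + H)⁻¹ = S * (ρ⁻¹ • 1 + K)⁻¹ * S := by
    have hfactor : ρ⁻¹ • G + H = Q * (ρ⁻¹ • 1 + K) * Q := by
      rw [mul_add, add_mul, Matrix.mul_smul, mul_one, Matrix.smul_mul, hQG, ← mul_assoc,
        ← mul_assoc, mul_nonsing_inv Q hQdet, one_mul, mul_assoc, nonsing_inv_mul Q hQdet,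
        mul_one]
    rw [hfactor, Matrix.mul_inv_rev, Matrix.mul_inv_rev, mul_assoc]
  clear_value K S
  have hlim := (hM.tendsto_inv_smul_one_add_mulVec hK (Q *ᵥ x)).comp tendsto_inv_atTop_nhdsGT_zero
  rw [hSg]
  refine (((continuous_const.matrix_mulVec continuous_id).tendsto _).comp hlim).congr fun ρ => ?_
  rw [Function.comp_apply, Function.comp_apply, id, hconj, ← mulVec_mulVec, ← mulVec_mulVec, hSg]

end IsMoorePenrose

theorem limit_of_regularized_inverse {n : ℕ} (H G : Matrix (Fin n) (Fin n) ℝ)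
    (hH : H.PosSemidef) (hG : G.PosDef) :
    (H.PosDef →
      Tendsto (fun ρ : ℝ => (ρ⁻¹ • G + H)⁻¹) atTop (nhds H⁻¹)) ∧
    (∀ (g : Fin n → ℝ) (Md Hd : Matrix (Fin n) (Fin n) ℝ),
      g ∈ LinearMap.range H.mulVecLin →
      IsMoorePenrose ((hG.posSemidef.sqrt)⁻¹ * H * (hG.posSemidef.sqrt)⁻¹) Md →
      IsMoorePenrose H Hd →
      Tendsto (fun ρ : ℝ => ((ρ⁻¹ • G + H)⁻¹).mulVec g) atTop
        (nhds ((hG.posSemidef.sqrt)⁻¹.mulVec (Md.mulVec ((hG.posSemidef.sqrt)⁻¹.mulVec g)))) ∧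
      (G = 1 →
        (hG.posSemidef.sqrt)⁻¹.mulVec (Md.mulVec ((hG.posSemidef.sqrt)⁻¹.mulVec g)) =
          Hd.mulVec g)) := by
  have hGdet : IsUnit G.det := (isUnit_iff_isUnit_det G).mp hG.isUnit
  refine ⟨fun hHpd => hHpd.tendsto_inv_smul_add G, fun g Md Hd hg hMd hHd => ?_⟩
  have hlim := hMd.tendsto_inv_smul_add_mulVec hH hG.posSemidef.isHermitian_sqrt
    hG.posSemidef.sqrt_mul_self hGdet hg
  refine ⟨hlim, fun hG1 => ?_⟩
  subst hG1
  have hHd' : IsMoorePenrose ((1 : Matrix (Fin n) (Fin n) ℝ)⁻¹ * H * 1⁻¹) Hd := by simpa using hHd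
  have hlim₁ := hHd'.tendsto_inv_smul_add_mulVec hH isHermitian_one (mul_one 1) hGdet hg
  simpa using tendsto_nhds_unique hlim hlim₁
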